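/- Let G be a finite connected weighted graph and let p, q, s be vertices of G with p ≠ q. Then r_{G_{pq}}(p,s) = ( r(p,s)·r(q,s) − j_s(p,q)² ) / r(p,q) = j_s(p,q) + j_p(q,s)·j_q(p,s)/r(p,q) = r(p,s) − j_p(q,s)²/r(p,q), where in G_{pq} the identified vertex is written p. -/

import Mathlib

open scoped Classical

/-- A finite weighted multigraph (resistive electrical network): finitely many
vertices and edges; each edge `e` has two endpoints `ends e` and a positive
length (resistance) `len e`.  Multiple edges and self-loops are allowed. -/
structure WMG where
  V : Type
  E : Type
  instV : Fintype V
  instE : Fintype E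
  ends : E → V × V
  len : E → ℝ
  len_pos : ∀ e, 0 < len e

attribute [instance] WMG.instV WMG.instE

/-- The Moore–Penrose pseudoinverse of a real square matrix, characterized by
the four Penrose equations (it exists and is unique for real matrices). -/
noncomputable def Matrix.mpinv {n : Type} [Fintype n] (A : Matrix n n ℝ) : Matrix n n ℝ :=
  if h : ∃ B : Matrix n n ℝ,
      A * B * A = A ∧ B * A * B = B ∧ Matrix.transpose (A * B) = A * B ∧ Matrix.transpose (B * A) = B * A
  then h.choose else 0

namespace WMG

/-- Indicator function. -/
noncomputable def ind {α : Type} (x y : α) : ℝ := if x = y then 1 else 0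

/-- The weighted Laplacian: an edge `e` with endpoints `a, b` contributes
`(1/len e) * (δ_{ua} - δ_{ub}) * (δ_{va} - δ_{vb})` to the `(u,v)` entry.  So
the off-diagonal `(u,v)` entry is `-∑ 1/len e` over the edges joining `u` and
`v`, and all row sums are zero. -/
noncomputable def lap (G : WMG) : Matrix G.V G.V ℝ :=
  ∑ e : G.E, (G.len e)⁻¹ •
    Matrix.of (fun u v : G.V =>
      (ind u (G.ends e).1 - ind u (G.ends e).2) *
      (ind v (G.ends e).1 - ind v (G.ends e).2))

/-- Effective resistance `r(p,q) = L⁺pp - 2·L⁺pq + L⁺qq`. -/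
noncomputable def res (G : WMG) (p q : G.V) : ℝ :=
  G.lap.mpinv p p - 2 * G.lap.mpinv p q + G.lap.mpinv q q

/-- Voltage function `j_p(q,s) = L⁺pp - L⁺pq - L⁺ps + L⁺qs`. -/
noncomputable def volt (G : WMG) (p q s : G.V) : ℝ :=
  G.lap.mpinv p p - G.lap.mpinv p q - G.lap.mpinv p s + G.lap.mpinv q s

/-- Two vertices are adjacent if some edge has them as its endpoints. -/
def Adj (G : WMG) (u v : G.V) : Prop :=
  ∃ e : G.E, G.ends e = (u, v) ∨ G.ends e = (v, u)

/-- `u` and `v` are joined by a walk in `G`. -/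
def Reach (G : WMG) (u v : G.V) : Prop := Relation.ReflTransGen G.Adj u v

/-- `G` is connected. -/
def Connected (G : WMG) : Prop := Nonempty G.V ∧ ∀ u v : G.V, G.Reach u v

/-- Quotient graph: identify vertices along (the equivalence generated by) the
relation `r`; all edges are kept. -/
noncomputable def quot (G : WMG) (r : G.V → G.V → Prop) : WMG where
  V := Quot r
  E := G.E
  instV := Fintype.ofFinite _
  instE := G.instE
  ends e := (Quot.mk r (G.ends e).1, Quot.mk r (G.ends e).2)
  len := G.len
  len_pos := G.len_pos

/-- The canonical map from the vertices of `G` to those of a quotient of `G`. -/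
def quotMap (G : WMG) (r : G.V → G.V → Prop) : G.V → (G.quot r).V := Quot.mk r

/-- `G_{pq}`: identify the vertices `p` and `q`. -/
noncomputable def ident2 (G : WMG) (p q : G.V) : WMG :=
  G.quot (fun x y => x = p ∧ y = q)

def ident2Map (G : WMG) (p q : G.V) : G.V → (G.ident2 p q).V :=
  G.quotMap _

/-- `G_{pqs}`: identify the vertices `p`, `q`, `s` into a single vertex. -/
noncomputable def ident3 (G : WMG) (p q s : G.V) : WMG :=
  G.quot (fun x y => (x = p ∧ y = q) ∨ (x = p ∧ y = s))

/-- `G_{pq,st}`: identify `p` with `q` and, separately, `s` with `t`. -/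
noncomputable def ident22 (G : WMG) (p q s t : G.V) : WMG :=
  G.quot (fun x y => (x = p ∧ y = q) ∨ (x = s ∧ y = t))

/-- `G_S`: identify all vertices in the set `S` into a single vertex. -/
noncomputable def identSet (G : WMG) (S : Set G.V) : WMG :=
  G.quot (fun x y => x ∈ S ∧ y ∈ S)

/-- `G − e`: delete the edge `e` (keeping all vertices). -/
noncomputable def delete (G : WMG) (e : G.E) : WMG where
  V := G.V
  E := {f : G.E // f ≠ e}
  instV := G.instV
  instE := Fintype.ofFinite _
  ends f := G.ends f.1
  len f := G.len f.1
  len_pos f := G.len_pos f.1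

/-- `e` is a bridge if `G − e` is disconnected. -/
def IsBridge (G : WMG) (e : G.E) : Prop := ¬ (G.delete e).Connected

/-- `Ḡ_e`: contract the edge `e` (identify its endpoints and delete it). -/
noncomputable def contract (G : WMG) (e : G.E) : WMG :=
  (G.delete e).quot (fun x y => x = (G.ends e).1 ∧ y = (G.ends e).2)

def contractMap (G : WMG) (e : G.E) : G.V → (G.contract e).V := Quot.mk _

/-- Replace the length of the edge `e` by `L'`. -/
noncomputable def setLen (G : WMG) (e : G.E) (L' : ℝ) (hL' : 0 < L') : WMG where
  V := G.V
  E := G.E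
  instV := G.instV
  instE := G.instE
  ends := G.ends
  len f := if f = e then L' else G.len f
  len_pos f := by
    by_cases hf : f = e
    · simpa [hf] using hL'
    · simpa [hf] using G.len_pos f

/-- `T` is (the edge set of) a spanning tree of `G`: using only edges of `T`
any two vertices are joined, and `T` has (number of vertices) − 1 edges. -/
def IsSpanningTree (G : WMG) (T : Finset G.E) : Prop :=
  (∀ u v : G.V, Relation.ReflTransGen
      (fun x y => ∃ e ∈ T, G.ends e = (x, y) ∨ G.ends e = (y, x)) u v) ∧
  T.card = Fintype.card G.V - 1

/-- `t G`: the number of spanning trees of `G` (equals `1` for a one-vertex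
graph; self-loops contribute nothing). -/
noncomputable def t (G : WMG) : ℕ := Nat.card {T : Finset G.E // G.IsSpanningTree T}

/-- `t(G_{pq})`, with the convention `t(G_{pp}) = 0`. -/
noncomputable def t2 (G : WMG) (p q : G.V) : ℕ :=
  if p = q then 0 else (G.ident2 p q).t

/-- Disjoint union of two graphs. -/
noncomputable def disjUnion (G₁ G₂ : WMG) : WMG where
  V := G₁.V ⊕ G₂.V
  E := G₁.E ⊕ G₂.E
  instV := inferInstance
  instE := inferInstance
  ends := Sum.elim (fun e => (Sum.inl (G₁.ends e).1, Sum.inl (G₁.ends e).2))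
                   (fun e => (Sum.inr (G₂.ends e).1, Sum.inr (G₂.ends e).2))
  len := Sum.elim G₁.len G₂.len
  len_pos := by
    rintro (e | e)
    · exact G₁.len_pos e
    · exact G₂.len_pos e

/-- Glue `G₁` and `G₂` along two pairs of vertices (`p₁ ↔ p₂`, `q₁ ↔ q₂`):
the result is the graph `G = G₁ ∪ G₂` with `G₁ ∩ G₂ = {p, q}` (the two pieces
share exactly these two vertices and no edges). -/
noncomputable def glue2 (G₁ G₂ : WMG) (p₁ q₁ : G₁.V) (p₂ q₂ : G₂.V) : WMG :=
  (G₁.disjUnion G₂).quot (fun x y =>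
    (x = Sum.inl p₁ ∧ y = Sum.inr p₂) ∨ (x = Sum.inl q₁ ∧ y = Sum.inr q₂))

/-- Glue `G₁` and `G₂` along three pairs of vertices: the result is the graph
`G = G₁ ∪ G₂` with `G₁ ∩ G₂ = {p, q, s}`. -/
noncomputable def glue3 (G₁ G₂ : WMG) (p₁ q₁ s₁ : G₁.V) (p₂ q₂ s₂ : G₂.V) : WMG :=
  (G₁.disjUnion G₂).quot (fun x y =>
    (x = Sum.inl p₁ ∧ y = Sum.inr p₂) ∨ (x = Sum.inl q₁ ∧ y = Sum.inr q₂) ∨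
    (x = Sum.inl s₁ ∧ y = Sum.inr s₂))

/-- Disjoint union of a finite family of graphs. -/
noncomputable def sigmaGraph {k : ℕ} (G : Fin k → WMG) : WMG where
  V := Σ i, (G i).V
  E := Σ i, (G i).E
  instV := inferInstance
  instE := inferInstance
  ends e := (⟨e.1, ((G e.1).ends e.2).1⟩, ⟨e.1, ((G e.1).ends e.2).2⟩)
  len e := (G e.1).len e.2
  len_pos e := (G e.1).len_pos e.2

/-- Glue the family `G i` along a common pair of vertices (all the `p i` are
identified together, and all the `q i` are identified together): the result is
`G = ⋃ G_i` with `G_i ∩ G_j = {p, q}` for all `i ≠ j`. -/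
noncomputable def glueFam {k : ℕ} (G : Fin k → WMG) (p q : ∀ i, (G i).V) : WMG :=
  (sigmaGraph G).quot (fun x y =>
    (∃ i j, x = ⟨i, p i⟩ ∧ y = ⟨j, p j⟩) ∨ (∃ i j, x = ⟨i, q i⟩ ∧ y = ⟨j, q j⟩))

/-- The cyclic successor on `Fin k`. -/
def finSucc {k : ℕ} (i : Fin k) : Fin k :=
  ⟨(i.1 + 1) % k, Nat.mod_lt _ (Nat.lt_of_le_of_lt (Nat.zero_le _) i.2)⟩

/-- `CG_k`: replace the `i`-th edge of the cycle `C_k` by the graph `G i`,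
identifying `t i` (of `G i`) with `s (i+1)` (of `G (i+1)`), cyclically. -/
noncomputable def cycleGlue {k : ℕ} (G : Fin k → WMG) (s t : ∀ i, (G i).V) : WMG :=
  (sigmaGraph G).quot (fun x y =>
    ∃ i, x = ⟨i, t i⟩ ∧ y = ⟨finSucc i, s (finSucc i)⟩)

/-- Join a new vertex `u` (the vertex `none`) to the vertex `p i` of `H` by
`a i` parallel unit edges, for each `i`.  The resulting graph `G` has `H = G − u`,
and if `p` is injective with all `a i ≥ 1` then `N_G(u) = {p 1, …, p n}` with
`a i` parallel edges joining `u` to `p i`. -/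
noncomputable def cone (H : WMG) {n : ℕ} (p : Fin n → H.V) (a : Fin n → ℕ) : WMG where
  V := Option H.V
  E := H.E ⊕ (Σ i : Fin n, Fin (a i))
  instV := inferInstance
  instE := inferInstance
  ends := Sum.elim (fun e => (some (H.ends e).1, some (H.ends e).2))
                   (fun e => (none, some (p e.1)))
  len := Sum.elim H.len (fun _ => 1)
  len_pos := by
    rintro (e | e)
    · exact H.len_pos e
    · exact one_pos

/-- The path graph `P_n` on `n` vertices `0, 1, …, n-1`, unit edge lengths. -/
noncomputable def path (n : ℕ) : WMG where
  V := Fin n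
  E := Fin (n - 1)
  instV := inferInstance
  instE := inferInstance
  ends i := (⟨i.1, by have := i.2; omega⟩, ⟨i.1 + 1, by have := i.2; omega⟩)
  len _ := 1
  len_pos _ := one_pos

/-- The cycle graph `C_n` on `n` vertices, unit edge lengths. -/
noncomputable def cycle (n : ℕ) : WMG where
  V := Fin n
  E := Fin n
  instV := inferInstance
  instE := inferInstance
  ends i := (i, finSucc i)
  len _ := 1
  len_pos _ := one_pos

/-- The modified fan graph `F̄an_n`: the path `P_n` together with one new hub
vertex joined to each path vertex by `a` parallel edges. -/
noncomputable def fanGraph (n a : ℕ) : WMG :=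
  (path n).cone (fun i : Fin n => i) (fun _ => a)

/-- The modified wheel graph `W̄_n`: the cycle `C_n` together with one new hub
vertex joined to each cycle vertex by `a` parallel edges. -/
noncomputable def wheelGraph (n a : ℕ) : WMG :=
  (cycle n).cone (fun i : Fin n => i) (fun _ => a)

end WMG

/-- The Morgan–Voyce polynomial `B_m(x) = ∑_{k=0}^m C(m+k+1, m−k) x^k`. -/
noncomputable def morganVoyce (m : ℕ) (x : ℝ) : ℝ :=
  ∑ k ∈ Finset.range (m + 1), (Nat.choose (m + k + 1) (m - k) : ℝ) * x ^ k

/-- The polynomial `W_m(x) = ∑_{k=0}^m ((2m+2)/(m+2+k)) C(m+2+k, m−k) x^k`. -/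
noncomputable def wheelPoly (m : ℕ) (x : ℝ) : ℝ :=
  ∑ k ∈ Finset.range (m + 1),
    ((2 * m + 2 : ℝ) / (m + 2 + k : ℝ)) * (Nat.choose (m + 2 + k) (m - k) : ℝ) * x ^ k

/-- The Lucas numbers: `L₀ = 2`, `L₁ = 1`, `L_{m+2} = L_m + L_{m+1}`
(so `L₂ = 3`). -/
def lucas : ℕ → ℕ
  | 0 => 2
  | 1 => 1
  | n + 2 => lucas n + lucas (n + 1)


/-! For connected `G` the pseudoinverse is explicit, `L⁺ = (L + J/n)⁻¹ - J/n` with `J` the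
all-ones matrix, and consequently `r(a,b) = x a - x b` for every potential `x` with
`L x = e_a - e_b`. Let `φ` and `ψ` be the potentials `L⁺(e_p - e_s)` and `L⁺(e_p - e_q)`,
and `u = φ - t ψ` with `t = j_p(q,s)/r(p,q)`, chosen so that `u p = u q`. Then `u` descends to
`G_{pq}`, whose Laplacian is `Πᵀ L Π` for the quotient map `Π`; there the current
`e_p - e_q` becomes zero, so `u` is a potential for the unit current from the merged vertex
to `s`. Hence `r_{G_{pq}}(p,s) = u p - u s = r(p,s) - t j_p(q,s)`. The other two forms follow
from `r(a,b) = j_a(b,c) + j_b(a,c)`. -/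

namespace Matrix

variable {n : Type} [Fintype n]

theorem mul_eq_mul_of_penrose {A X Y : Matrix n n ℝ} (hX : A * X * A = A) (hY : A * Y * A = A)
    (hXs : (A * X)ᵀ = A * X) (hYs : (A * Y)ᵀ = A * Y) : A * X = A * Y :=
  calc A * X = (A * Y)ᵀ * (A * X)ᵀ := by
        rw [hXs, hYs, ← Matrix.mul_assoc, hY]
    _ = (A * X * A * Y)ᵀ := by rw [← transpose_mul, Matrix.mul_assoc (A * X)]
    _ = A * Y := by rw [hX, hYs]

theorem mul_eq_mul_of_penrose' {A X Y : Matrix n n ℝ} (hX : A * X * A = A) (hY : A * Y * A = A)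
    (hXs : (X * A)ᵀ = X * A) (hYs : (Y * A)ᵀ = Y * A) : X * A = Y * A :=
  calc X * A = (X * A)ᵀ * (Y * A)ᵀ := by
        rw [hXs, hYs, ← Matrix.mul_assoc, Matrix.mul_assoc X, Matrix.mul_assoc X, hY]
    _ = (Y * A * X * A)ᵀ := by simp only [transpose_mul, Matrix.mul_assoc]
    _ = Y * A := by rw [Matrix.mul_assoc Y, Matrix.mul_assoc Y, hX, hYs]

theorem mpinv_eq_of_penrose {A B : Matrix n n ℝ} (h₁ : A * B * A = A) (h₂ : B * A * B = B)
    (h₃ : (A * B)ᵀ = A * B) (h₄ : (B * A)ᵀ = B * A) : A.mpinv = B := by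
  have hex : ∃ C : Matrix n n ℝ,
      A * C * A = A ∧ C * A * C = C ∧ (A * C)ᵀ = A * C ∧ (C * A)ᵀ = C * A :=
    ⟨B, h₁, h₂, h₃, h₄⟩
  obtain ⟨c₁, c₂, c₃, c₄⟩ := hex.choose_spec
  rw [mpinv, dif_pos hex]
  calc hex.choose = hex.choose * A * hex.choose := c₂.symm
    _ = B * (A * B) := by
        rw [mul_eq_mul_of_penrose' c₁ h₁ c₄ h₄, Matrix.mul_assoc,
          mul_eq_mul_of_penrose c₁ h₁ c₃ h₃]
    _ = B := by rw [← Matrix.mul_assoc, h₂]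

theorem mulVec_single_sub_single_apply [DecidableEq n] (A : Matrix n n ℝ) (a b i : n) :
    (A *ᵥ (Pi.single a 1 - Pi.single b 1)) i = A i a - A i b := by
  simp [mulVec_sub]

end Matrix

noncomputable def avgMat (V : Type) [Fintype V] : Matrix V V ℝ :=
  (Fintype.card V : ℝ)⁻¹ • Matrix.vecMulVec 1 1

section avgMat

open Matrix

variable {V : Type} [Fintype V]

theorem avgMat_mulVec (x : V → ℝ) :
    avgMat V *ᵥ x = ((Fintype.card V : ℝ)⁻¹ * ∑ i, x i) • 1 := by
  rw [avgMat, smul_mulVec, vecMulVec_mulVec, one_dotProduct, op_smul_eq_smul, smul_smul]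

theorem avgMat_transpose : (avgMat V)ᵀ = avgMat V := by
  rw [avgMat, transpose_smul, transpose_vecMulVec]

theorem avgMat_mul_avgMat [Nonempty V] : avgMat V * avgMat V = avgMat V := by
  ext i j
  simp [avgMat, mul_apply]

end avgMat

namespace WMG

open Matrix

section Laplacian

variable (G : WMG)

noncomputable def edgeVec (e : G.E) : G.V → ℝ :=
  Pi.single (G.ends e).1 1 - Pi.single (G.ends e).2 1

theorem lap_eq_sum_vecMulVec :
    G.lap = ∑ e, (G.len e)⁻¹ • vecMulVec (G.edgeVec e) (G.edgeVec e) := by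
  refine Finset.sum_congr rfl fun e _ => ?_
  ext u v
  simp [edgeVec, ind, vecMulVec_apply, Pi.single_apply]

theorem edgeVec_dotProduct (e : G.E) (x : G.V → ℝ) :
    G.edgeVec e ⬝ᵥ x = x (G.ends e).1 - x (G.ends e).2 := by
  simp [edgeVec, sub_dotProduct]

theorem lap_mulVec (x : G.V → ℝ) :
    G.lap *ᵥ x = ∑ e, ((G.len e)⁻¹ * (x (G.ends e).1 - x (G.ends e).2)) • G.edgeVec e := by
  simp only [lap_eq_sum_vecMulVec, sum_mulVec, smul_mulVec, vecMulVec_mulVec, edgeVec_dotProduct,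
    op_smul_eq_smul, smul_smul]

theorem dotProduct_lap_mulVec (x : G.V → ℝ) :
    x ⬝ᵥ (G.lap *ᵥ x) = ∑ e, (G.len e)⁻¹ * (x (G.ends e).1 - x (G.ends e).2) ^ 2 := by
  rw [lap_mulVec, dotProduct_comm, sum_dotProduct]
  simp only [smul_dotProduct, edgeVec_dotProduct, smul_eq_mul, mul_assoc, sq]

theorem lap_transpose : G.lapᵀ = G.lap := by
  simp only [lap_eq_sum_vecMulVec, transpose_sum, transpose_smul, transpose_vecMulVec]

theorem inv_len_mul_sq_nonneg (e : G.E) (a : ℝ) : 0 ≤ (G.len e)⁻¹ * a ^ 2 :=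
  mul_nonneg (inv_nonneg.2 (G.len_pos e).le) (sq_nonneg a)

theorem dotProduct_lap_mulVec_nonneg (x : G.V → ℝ) : 0 ≤ x ⬝ᵥ (G.lap *ᵥ x) := by
  rw [dotProduct_lap_mulVec]
  exact Finset.sum_nonneg fun e _ => G.inv_len_mul_sq_nonneg e _

theorem edge_eq_of_dotProduct_lap_mulVec_eq_zero {x : G.V → ℝ}
    (hx : x ⬝ᵥ (G.lap *ᵥ x) = 0) (e : G.E) : x (G.ends e).1 = x (G.ends e).2 := by
  rw [dotProduct_lap_mulVec,
    Finset.sum_eq_zero_iff_of_nonneg fun e _ => G.inv_len_mul_sq_nonneg e _] at hx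
  simpa [(G.len_pos e).ne', sub_eq_zero] using hx e (Finset.mem_univ e)

theorem lap_mulVec_eq_zero_of_dotProduct_eq_zero {x : G.V → ℝ}
    (hx : x ⬝ᵥ (G.lap *ᵥ x) = 0) : G.lap *ᵥ x = 0 := by
  simp [lap_mulVec, G.edge_eq_of_dotProduct_lap_mulVec_eq_zero hx]

theorem lap_mulVec_one : G.lap *ᵥ 1 = 0 := by
  simp [lap_mulVec]

theorem lap_mul_avgMat : G.lap * avgMat G.V = 0 := by
  rw [avgMat, Matrix.mul_smul, mul_vecMulVec, lap_mulVec_one, zero_vecMulVec, smul_zero]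

theorem avgMat_mul_lap : avgMat G.V * G.lap = 0 := by
  rw [avgMat, smul_mul, vecMulVec_mul, ← lap_transpose, vecMul_transpose, lap_mulVec_one,
    vecMulVec_zero, smul_zero]

theorem transpose_lap_add_avgMat_inv_sub_avgMat :
    ((G.lap + avgMat G.V)⁻¹ - avgMat G.V)ᵀ = (G.lap + avgMat G.V)⁻¹ - avgMat G.V := by
  rw [transpose_sub, transpose_nonsing_inv, transpose_add, lap_transpose, avgMat_transpose]

end Laplacian

section Connected

variable {G : WMG}

theorem Connected.eq_of_forall_edge (hG : G.Connected) {x : G.V → ℝ}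
    (hx : ∀ e, x (G.ends e).1 = x (G.ends e).2) (u v : G.V) : x u = x v := by
  induction hG.2 u v with
  | refl => rfl
  | tail _ hadj ih =>
    obtain ⟨e, he | he⟩ := hadj
    · simpa [he, ih] using hx e
    · simpa [he, ih] using (hx e).symm

theorem Connected.isUnit_det_lap_add_avgMat (hG : G.Connected) :
    IsUnit (G.lap + avgMat G.V).det := by
  have : Nonempty G.V := hG.1
  rw [← isUnit_iff_isUnit_det, ← mulVec_injective_iff_isUnit]
  intro x y hxy
  set z := x - y
  have hz : z ⬝ᵥ (G.lap *ᵥ z) + (Fintype.card G.V : ℝ)⁻¹ * (∑ i, z i) ^ 2 = 0 := by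
    have hMz : (G.lap + avgMat G.V) *ᵥ z = 0 := by rw [mulVec_sub, hxy, sub_self]
    have := congrArg (z ⬝ᵥ ·) hMz
    simp only [add_mulVec, avgMat_mulVec, dotProduct_add, dotProduct_smul, dotProduct_one,
      dotProduct_zero, smul_eq_mul] at this
    linear_combination this
  have hqf := G.dotProduct_lap_mulVec_nonneg z
  have hsq : 0 ≤ (Fintype.card G.V : ℝ)⁻¹ * (∑ i, z i) ^ 2 := by positivity
  have hsum : ∑ i, z i = 0 := by
    have hc : (Fintype.card G.V : ℝ)⁻¹ ≠ 0 := by positivity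
    simpa using (mul_eq_zero.1 (show (Fintype.card G.V : ℝ)⁻¹ * (∑ i, z i) ^ 2 = 0 by
      linarith)).resolve_left hc
  have hconst := hG.eq_of_forall_edge (G.edge_eq_of_dotProduct_lap_mulVec_eq_zero (by linarith))
  funext u
  have : (Fintype.card G.V : ℝ) * z u = 0 := by
    simpa [hconst _ u] using hsum
  simpa [z, sub_eq_zero] using this

theorem Connected.avgMat_mul_inv (hG : G.Connected) :
    avgMat G.V * (G.lap + avgMat G.V)⁻¹ = avgMat G.V := by
  have : Nonempty G.V := hG.1
  have hAM : avgMat G.V * (G.lap + avgMat G.V) = avgMat G.V := by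
    rw [Matrix.mul_add, avgMat_mul_lap, avgMat_mul_avgMat, zero_add]
  calc avgMat G.V * (G.lap + avgMat G.V)⁻¹
      = avgMat G.V * (G.lap + avgMat G.V) * (G.lap + avgMat G.V)⁻¹ := by rw [hAM]
    _ = avgMat G.V := mul_nonsing_inv_cancel_right _ _ hG.isUnit_det_lap_add_avgMat

theorem Connected.lap_mul_inv_sub_avgMat (hG : G.Connected) :
    G.lap * ((G.lap + avgMat G.V)⁻¹ - avgMat G.V) = 1 - avgMat G.V := by
  have : Nonempty G.V := hG.1
  calc G.lap * ((G.lap + avgMat G.V)⁻¹ - avgMat G.V)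
      = ((G.lap + avgMat G.V) - avgMat G.V) * ((G.lap + avgMat G.V)⁻¹ - avgMat G.V) := by
        rw [add_sub_cancel_right]
    _ = 1 - avgMat G.V := by
        rw [Matrix.sub_mul, Matrix.mul_sub, Matrix.mul_sub,
          mul_nonsing_inv _ hG.isUnit_det_lap_add_avgMat, hG.avgMat_mul_inv, Matrix.add_mul,
          lap_mul_avgMat, avgMat_mul_avgMat, zero_add]
        abel

theorem Connected.lap_mpinv_eq (hG : G.Connected) :
    G.lap.mpinv = (G.lap + avgMat G.V)⁻¹ - avgMat G.V := by
  have : Nonempty G.V := hG.1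
  set B := (G.lap + avgMat G.V)⁻¹ - avgMat G.V
  have hLB : G.lap * B = 1 - avgMat G.V := hG.lap_mul_inv_sub_avgMat
  have hBL : B * G.lap = 1 - avgMat G.V := by
    have hBt : Bᵀ = B := G.transpose_lap_add_avgMat_inv_sub_avgMat
    rw [← hBt, ← lap_transpose, ← transpose_mul, hLB,
      transpose_sub, transpose_one, avgMat_transpose]
  have hAB : avgMat G.V * B = 0 := by
    rw [Matrix.mul_sub, hG.avgMat_mul_inv, avgMat_mul_avgMat, sub_self]
  refine mpinv_eq_of_penrose ?_ ?_ ?_ ?_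
  · rw [hLB, Matrix.sub_mul, Matrix.one_mul, avgMat_mul_lap, sub_zero]
  · rw [hBL, Matrix.sub_mul, Matrix.one_mul, hAB, sub_zero]
  · rw [hLB, transpose_sub, transpose_one, avgMat_transpose]
  · rw [hBL, transpose_sub, transpose_one, avgMat_transpose]

theorem Connected.lap_mpinv_transpose (hG : G.Connected) : G.lap.mpinvᵀ = G.lap.mpinv := by
  rw [hG.lap_mpinv_eq, G.transpose_lap_add_avgMat_inv_sub_avgMat]

theorem Connected.lap_mpinv_comm (hG : G.Connected) (i j : G.V) :
    G.lap.mpinv j i = G.lap.mpinv i j := by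
  conv_lhs => rw [← hG.lap_mpinv_transpose]
  rfl

theorem Connected.lap_mul_lap_mpinv (hG : G.Connected) :
    G.lap * G.lap.mpinv = 1 - avgMat G.V := by
  rw [hG.lap_mpinv_eq, hG.lap_mul_inv_sub_avgMat]

theorem Connected.lap_mpinv_mul_lap (hG : G.Connected) :
    G.lap.mpinv * G.lap = 1 - avgMat G.V := by
  have h := congrArg transpose hG.lap_mul_lap_mpinv
  rwa [transpose_mul, hG.lap_mpinv_transpose, lap_transpose, transpose_sub, transpose_one,
    avgMat_transpose] at h

theorem Connected.lap_mulVec_lap_mpinv_mulVec (hG : G.Connected) {d : G.V → ℝ}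
    (hd : ∑ i, d i = 0) : G.lap *ᵥ (G.lap.mpinv *ᵥ d) = d := by
  rw [mulVec_mulVec, hG.lap_mul_lap_mpinv, sub_mulVec, one_mulVec, avgMat_mulVec, hd, mul_zero,
    zero_smul, sub_zero]

theorem Connected.res_eq_sub_of_lap_mulVec (hG : G.Connected) {a b : G.V} {x : G.V → ℝ}
    (hx : G.lap *ᵥ x = Pi.single a 1 - Pi.single b 1) : G.res a b = x a - x b := by
  have hy : G.lap.mpinv *ᵥ (Pi.single a 1 - Pi.single b 1) = x - avgMat G.V *ᵥ x := by
    rw [← hx, mulVec_mulVec, hG.lap_mpinv_mul_lap, sub_mulVec, one_mulVec]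
  have hya := congrFun hy a
  have hyb := congrFun hy b
  simp only [mulVec_single_sub_single_apply, avgMat_mulVec, Pi.sub_apply, Pi.smul_apply,
    Pi.one_apply] at hya hyb
  rw [res]
  linarith [hG.lap_mpinv_comm a b]

theorem Connected.res_pos (hG : G.Connected) {a b : G.V} (hab : a ≠ b) : 0 < G.res a b := by
  set y := G.lap.mpinv *ᵥ (Pi.single a 1 - Pi.single b 1)
  have hy : G.lap *ᵥ y = Pi.single a 1 - Pi.single b 1 :=
    hG.lap_mulVec_lap_mpinv_mulVec (by simp [Finset.sum_sub_distrib])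
  have hres : G.res a b = y ⬝ᵥ (G.lap *ᵥ y) := by
    rw [hG.res_eq_sub_of_lap_mulVec hy, hy, dotProduct_sub, dotProduct_single_one,
      dotProduct_single_one]
  refine hres ▸ (G.dotProduct_lap_mulVec_nonneg y).lt_of_ne' fun h0 => ?_
  have := congrFun (hy.symm.trans (G.lap_mulVec_eq_zero_of_dotProduct_eq_zero h0)) a
  simp [hab] at this

theorem Connected.volt_comm (hG : G.Connected) (a b c : G.V) : G.volt a b c = G.volt a c b := by
  rw [volt, volt]
  linarith [hG.lap_mpinv_comm b c]

theorem Connected.res_eq_volt_add_volt (hG : G.Connected) (a b c : G.V) :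
    G.res a b = G.volt a b c + G.volt b a c := by
  rw [res, volt, volt]
  linarith [hG.lap_mpinv_comm a b]

end Connected

section Quotient

variable {G : WMG} (r : G.V → G.V → Prop)

theorem Connected.quot (hG : G.Connected) : (G.quot r).Connected := by
  refine ⟨⟨G.quotMap r hG.1.some⟩, Quot.ind fun x => Quot.ind fun y => ?_⟩
  refine (hG.2 x y).lift (G.quotMap r) fun a b ⟨e, he⟩ => ⟨e, ?_⟩
  rcases he with he | he
  · exact Or.inl (by simp [WMG.quot, quotMap, he])
  · exact Or.inr (by simp [WMG.quot, quotMap, he])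

variable (G)

noncomputable def quotMat : Matrix G.V (G.quot r).V ℝ :=
  of fun x => Pi.single (G.quotMap r x) 1

theorem quotMat_transpose_mulVec_single (a : G.V) :
    (G.quotMat r)ᵀ *ᵥ Pi.single a 1 = Pi.single (G.quotMap r a) 1 := by
  ext c
  simp [quotMat]

theorem quotMat_mulVec (w : (G.quot r).V → ℝ) : G.quotMat r *ᵥ w = w ∘ G.quotMap r := by
  ext x
  simp [quotMat, mulVec, single_dotProduct]

theorem quotMat_transpose_mulVec_edgeVec (e : G.E) :
    (G.quotMat r)ᵀ *ᵥ G.edgeVec e = (G.quot r).edgeVec e := by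
  rw [edgeVec, mulVec_sub, quotMat_transpose_mulVec_single, quotMat_transpose_mulVec_single]
  rfl

theorem lap_quot : (G.quot r).lap = (G.quotMat r)ᵀ * G.lap * G.quotMat r := by
  rw [lap_eq_sum_vecMulVec, lap_eq_sum_vecMulVec, Matrix.mul_sum, Matrix.sum_mul]
  refine Finset.sum_congr rfl fun e _ => ?_
  rw [Matrix.mul_smul, smul_mul, mul_vecMulVec, vecMulVec_mul, ← mulVec_transpose]
  exact congrArg (fun v => (G.len e)⁻¹ • vecMulVec v v)
    (G.quotMat_transpose_mulVec_edgeVec r e).symm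

theorem lap_quot_mulVec (w : (G.quot r).V → ℝ) :
    (G.quot r).lap *ᵥ w = (G.quotMat r)ᵀ *ᵥ (G.lap *ᵥ (w ∘ G.quotMap r)) := by
  rw [lap_quot, ← mulVec_mulVec, ← mulVec_mulVec, quotMat_mulVec]

end Quotient

variable {G : WMG}

theorem Connected.res_ident2 (hG : G.Connected) {p q : G.V} (hpq : p ≠ q) (s : G.V) :
    (G.ident2 p q).res (G.ident2Map p q p) (G.ident2Map p q s) =
      G.res p s - G.volt p q s ^ 2 / G.res p q := by
  have hr : G.res p q ≠ 0 := (hG.res_pos hpq).ne'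
  set φ := G.lap.mpinv *ᵥ (Pi.single p 1 - Pi.single s 1)
  set ψ := G.lap.mpinv *ᵥ (Pi.single p 1 - Pi.single q 1)
  set t := G.volt p q s / G.res p q
  set u := φ - t • ψ
  have hLu : G.lap *ᵥ u =
      Pi.single p 1 - Pi.single s 1 - t • (Pi.single p 1 - Pi.single q 1) := by
    rw [mulVec_sub, mulVec_smul,
      hG.lap_mulVec_lap_mpinv_mulVec (by simp [Finset.sum_sub_distrib]),
      hG.lap_mulVec_lap_mpinv_mulVec (by simp [Finset.sum_sub_distrib])]
  have ht : t * G.res p q = G.volt p q s := div_mul_cancel₀ _ hr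
  have hupq : u p = u q := by
    simp only [u, φ, ψ, Pi.sub_apply, Pi.smul_apply, mulVec_single_sub_single_apply, smul_eq_mul]
    simp only [res, volt] at ht
    linear_combination (t - 1) * hG.lap_mpinv_comm p q - ht
  set w : (G.ident2 p q).V → ℝ := Quot.lift u (by rintro x y ⟨rfl, rfl⟩; exact hupq)
  have hw : (G.ident2 p q).lap *ᵥ w =
      Pi.single (G.ident2Map p q p) 1 - Pi.single (G.ident2Map p q s) 1 := by
    have hqp : G.quotMap (fun x y => x = p ∧ y = q) q = G.quotMap _ p :=
      (Quot.sound ⟨rfl, rfl⟩).symm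
    rw [show (G.ident2 p q).lap *ᵥ w = _ from G.lap_quot_mulVec _ w]
    change (G.quotMat _)ᵀ *ᵥ (G.lap *ᵥ u) = _
    rw [hLu, mulVec_sub, mulVec_smul, mulVec_sub, mulVec_sub, quotMat_transpose_mulVec_single,
      quotMat_transpose_mulVec_single, quotMat_transpose_mulVec_single, hqp, sub_self, smul_zero,
      sub_zero]
    rfl
  have hG' : (G.ident2 p q).Connected := hG.quot _
  rw [hG'.res_eq_sub_of_lap_mulVec hw]
  change u p - u s = _
  simp only [u, φ, ψ, Pi.sub_apply, Pi.smul_apply, mulVec_single_sub_single_apply, smul_eq_mul]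
  rw [show G.volt p q s ^ 2 / G.res p q = t * G.volt p q s by
    simp only [t]
    ring]
  simp only [res, volt]
  linear_combination (t - 1) * hG.lap_mpinv_comm p s - t * hG.lap_mpinv_comm q s

end WMG

/-- For a finite connected weighted graph `G` and vertices `p ≠ q`, `s`:
`r_{G_{pq}}(p,s) = (r(p,s) r(q,s) - j_s(p,q)²)/r(p,q)
               = j_s(p,q) + j_p(q,s) j_q(p,s)/r(p,q)
               = r(p,s) - j_p(q,s)²/r(p,q)`,
where in `G_{pq}` the identified vertex is written `p`. -/
theorem res_of_two_vertex_identification (G : WMG) (hG : G.Connected)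
    (p q s : G.V) (hpq : p ≠ q) :
    (G.ident2 p q).res (G.ident2Map p q p) (G.ident2Map p q s) =
        (G.res p s * G.res q s - G.volt s p q ^ 2) / G.res p q ∧
    (G.ident2 p q).res (G.ident2Map p q p) (G.ident2Map p q s) =
        G.volt s p q + G.volt p q s * G.volt q p s / G.res p q ∧
    (G.ident2 p q).res (G.ident2Map p q p) (G.ident2Map p q s) =
        G.res p s - G.volt p q s ^ 2 / G.res p q := by
  have hres := hG.res_ident2 hpq s
  have hr : G.res p q ≠ 0 := (hG.res_pos hpq).ne'
  have hrpq : G.res p q = G.volt p q s + G.volt q p s := hG.res_eq_volt_add_volt p q s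
  have hrps : G.res p s = G.volt p q s + G.volt s p q := by
    rw [hG.res_eq_volt_add_volt p s q, hG.volt_comm p s q]
  have hrqs : G.res q s = G.volt q p s + G.volt s p q := by
    rw [hG.res_eq_volt_add_volt q s p, hG.volt_comm q s p, hG.volt_comm s q p]
  refine ⟨?_, ?_, hres⟩ <;> rw [hres] <;> field_simp <;> simp only [hrps, hrqs, hrpq] <;> ring
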